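/- arXiv:math/9912072 — 2 statements merged into one kernel-verified Lean document; each statement's English description precedes it below -/
import Mathlib

section
/- Let V = V₁ ⊕ ⋯ ⊕ V_t be a direct sum of K-vector spaces, for each j let m_j : V → V be a linear automorphism with m_j(v) - v ∈ V_j for all v, and let M = m_t ∘ ⋯ ∘ m₁. Let v ∈ V have components (v₁,...,v_t) and let a ∈ K. Then M(v) = a·v if and only if for every k = 1,...,t, (m_k ∘ ⋯ ∘ m₁)(v) has components (a·v₁, ..., a·v_k, v_{k+1}, ..., v_t). -/
def compUpTo {R : Type*} [Field R] {t : ℕ} {V : Fin t → Type*}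
    [∀ i, AddCommGroup (V i)] [∀ i, Module R (V i)]
    (m : Fin t → ((∀ i, V i) ≃ₗ[R] (∀ i, V i))) : ℕ → ((∀ i, V i) ≃ₗ[R] (∀ i, V i))
  | 0 => LinearEquiv.refl R _
  | k + 1 => if h : k < t then (compUpTo m k).trans (m ⟨k, h⟩) else compUpTo m k

/-!
Step `j` only moves component `j`. Hence after `n` steps every component `i ≥ n` is still `v i`,
and component `i` no longer changes once step `i` has been applied: the `i`-th component of
`M v` is that of `(m_i ∘ ⋯ ∘ m_0) v`.
-/

namespace compUpTo

variable {K : Type*} [Field K] {t : ℕ} {V : Fin t → Type*}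
    [∀ i, AddCommGroup (V i)] [∀ i, Module K (V i)]
    {m : Fin t → ((∀ i, V i) ≃ₗ[K] (∀ i, V i))}

theorem succ_apply_of_ne (hm : ∀ j : Fin t, ∀ v : ∀ i, V i, ∀ i, i ≠ j → (m j v - v) i = 0)
    (v : ∀ i, V i) (n : ℕ) (i : Fin t) (hi : i.val ≠ n) :
    compUpTo m (n + 1) v i = compUpTo m n v i := by
  rw [compUpTo]
  split_ifs with hn
  · exact sub_eq_zero.mp (hm ⟨n, hn⟩ _ i (Fin.ne_of_val_ne hi))
  · rfl

theorem apply_of_le (hm : ∀ j : Fin t, ∀ v : ∀ i, V i, ∀ i, i ≠ j → (m j v - v) i = 0)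
    (v : ∀ i, V i) {n : ℕ} {i : Fin t} (hi : n ≤ i.val) :
    compUpTo m n v i = v i := by
  induction n with
  | zero => rfl
  | succ n ih => rw [succ_apply_of_ne hm v n i (by omega), ih (by omega)]

theorem apply_of_lt (hm : ∀ j : Fin t, ∀ v : ∀ i, V i, ∀ i, i ≠ j → (m j v - v) i = 0)
    (v : ∀ i, V i) {n : ℕ} {i : Fin t} (hi : i.val < n) :
    compUpTo m n v i = compUpTo m (i.val + 1) v i := by
  induction n, hi using Nat.le_induction with
  | base => rfl
  | succ n hn ih => rw [succ_apply_of_ne hm v n i (by omega), ih]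

end compUpTo

/-- M v = a • v iff each partial product multiplies the first components by a and
leaves the remaining components unchanged. -/
theorem stmt4 {K : Type*} [Field K] {t : ℕ} {V : Fin t → Type*}
    [∀ i, AddCommGroup (V i)] [∀ i, Module K (V i)]
    (m : Fin t → ((∀ i, V i) ≃ₗ[K] (∀ i, V i)))
    (hm : ∀ j : Fin t, ∀ v : ∀ i, V i, ∀ i, i ≠ j → (m j v - v) i = 0)
    (v : ∀ i, V i) (a : K) :
    compUpTo m t v = a • v ↔
      ∀ k : Fin t, ∀ i : Fin t,
        (compUpTo m (k.val + 1) v) i = if i ≤ k then a • v i else v i := by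
  have settled (i : Fin t) : compUpTo m t v i = compUpTo m (i.val + 1) v i :=
    compUpTo.apply_of_lt hm v i.isLt
  constructor
  · intro hMv k i
    split_ifs with hik
    · rw [compUpTo.apply_of_lt hm v (Nat.lt_succ_of_le hik), ← settled, hMv, Pi.smul_apply]
    · exact compUpTo.apply_of_le hm v (by omega)
  · intro hk
    funext i
    rw [settled, hk i i, if_pos le_rfl, Pi.smul_apply]
end

section
/- Let A be an invertible t×t block matrix over a field K (with blocks indexed by a decomposition V = V₁ ⊕ ⋯ ⊕ V_t), and suppose A = A_t ⋯ A₁ where each A_j is an invertible block matrix equal to the identity except possibly in its j-th block row. Then the factors A_j are uniquely determined by A: if also A = B_t ⋯ B₁ with each B_j invertible and equal to the identity except in its j-th block row, then A_j = B_j for all j. -/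
/-!
Write `Pₖ = m_{k-1} ∘ ⋯ ∘ m₀`. Since `mₙ` changes only the `n`-th block, the blocks `i < k` of
`Pₖ v` are never touched again, so the `j`-th block of the full product `Pₜ v` is the `j`-th block
of `mⱼ (Pⱼ v)`. By strong induction on `j`, the two factorizations share `Pⱼ`, which is
invertible, so `Aⱼ` and `Bⱼ` agree on the `j`-th block of every vector, and off it both are the
identity.
-/

section

variable {K : Type*} [Field K] {t : ℕ} {V : Fin t → Type*}
  [∀ i, AddCommGroup (V i)] [∀ i, Module K (V i)]

theorem compUpTo_succ_of_lt (m : Fin t → ((∀ i, V i) ≃ₗ[K] (∀ i, V i))) {k : ℕ} (hk : k < t) :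
    compUpTo m (k + 1) = (compUpTo m k).trans (m ⟨k, hk⟩) := by
  simp only [compUpTo, dif_pos hk]

theorem compUpTo_congr {A B : Fin t → ((∀ i, V i) ≃ₗ[K] (∀ i, V i))} {k : ℕ}
    (hAB : ∀ j : Fin t, (j : ℕ) < k → A j = B j) : compUpTo A k = compUpTo B k := by
  induction k with
  | zero => rfl
  | succ k ih =>
    have hprefix := ih fun j hj => hAB j (Nat.lt_succ_of_lt hj)
    by_cases hk : k < t
    · rw [compUpTo_succ_of_lt A hk, compUpTo_succ_of_lt B hk, hprefix,
        hAB ⟨k, hk⟩ (Nat.lt_succ_self k)]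
    · simp only [compUpTo, dif_neg hk, hprefix]

theorem compUpTo_apply_of_lt_of_le {m : Fin t → ((∀ i, V i) ≃ₗ[K] (∀ i, V i))}
    (hm : ∀ j : Fin t, ∀ v : ∀ i, V i, ∀ i, i ≠ j → (m j v) i = v i)
    {k n : ℕ} (hkn : k ≤ n) (v : ∀ i, V i) {i : Fin t} (hi : (i : ℕ) < k) :
    compUpTo m n v i = compUpTo m k v i := by
  induction n, hkn using Nat.le_induction with
  | base => rfl
  | succ n hkn ih =>
    by_cases hn : n < t
    · rw [compUpTo_succ_of_lt m hn, LinearEquiv.trans_apply,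
        hm _ _ i (Fin.ne_of_val_ne (by simp only; omega)), ih]
    · simp only [compUpTo, dif_neg hn, ih]

theorem compUpTo_apply_self {m : Fin t → ((∀ i, V i) ≃ₗ[K] (∀ i, V i))}
    (hm : ∀ j : Fin t, ∀ v : ∀ i, V i, ∀ i, i ≠ j → (m j v) i = v i)
    (v : ∀ i, V i) (j : Fin t) :
    compUpTo m t v j = m j (compUpTo m j v) j := by
  rw [compUpTo_apply_of_lt_of_le hm j.isLt v (Nat.lt_succ_self j), compUpTo_succ_of_lt m j.isLt]
  rfl

theorem LinearEquiv.eq_of_apply_eq_of_forall_ne {f g : (∀ i, V i) ≃ₗ[K] (∀ i, V i)} {j : Fin t}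
    (hf : ∀ v : ∀ i, V i, ∀ i, i ≠ j → f v i = v i)
    (hg : ∀ v : ∀ i, V i, ∀ i, i ≠ j → g v i = v i)
    (hj : ∀ v, f v j = g v j) : f = g := by
  ext v i
  by_cases hij : i = j
  · subst hij
    exact hj v
  · rw [hf v i hij, hg v i hij]

end

theorem stmt19_general {K : Type*} [Field K] {t : ℕ} {V : Fin t → Type*}
    [∀ i, AddCommGroup (V i)] [∀ i, Module K (V i)]
    (A B : Fin t → ((∀ i, V i) ≃ₗ[K] (∀ i, V i)))
    (hA : ∀ j : Fin t, ∀ v : ∀ i, V i, ∀ i, i ≠ j → (A j v) i = v i)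
    (hB : ∀ j : Fin t, ∀ v : ∀ i, V i, ∀ i, i ≠ j → (B j v) i = v i)
    (h : compUpTo A t = compUpTo B t) :
    ∀ j, A j = B j := by
  intro j
  induction j using WellFoundedLT.induction with
  | _ j ih =>
    have hprefix : compUpTo A j = compUpTo B j := compUpTo_congr fun i hi => ih i hi
    refine LinearEquiv.eq_of_apply_eq_of_forall_ne (hA j) (hB j) fun w => ?_
    obtain ⟨v, rfl⟩ := (compUpTo A j).surjective w
    rw [← compUpTo_apply_self hA, h, compUpTo_apply_self hB, hprefix]

/-- Uniqueness of the factorization of an invertible block operator into invertible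
factors each equal to the identity outside its own block row. -/
theorem stmt19 {K : Type*} [Field K] {t : ℕ} {V : Fin t → Type*}
    [∀ i, AddCommGroup (V i)] [∀ i, Module K (V i)]
    [∀ i, FiniteDimensional K (V i)]
    (A B : Fin t → ((∀ i, V i) ≃ₗ[K] (∀ i, V i)))
    (hA : ∀ j : Fin t, ∀ v : ∀ i, V i, ∀ i, i ≠ j → (A j v) i = v i)
    (hB : ∀ j : Fin t, ∀ v : ∀ i, V i, ∀ i, i ≠ j → (B j v) i = v i)
    (h : compUpTo A t = compUpTo B t) :
    ∀ j, A j = B j :=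
  stmt19_general A B hA hB h
end
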